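/- For every ε > 0 there exist θ̄ > 0 and CDFs F_1, F_2 : ℝ → ℝ (each nondecreasing with values in [0,1] and F_i(θ̄) = 1) such that, with c = 0, each profit function π_i(p) = p·(1 − F_i(p)) is concave on [0, θ̄] with sup_{p ∈ [0,θ̄]} π_i(p) = 1 for i = 1, 2, and yet sup_{p ∈ [0,θ̄]} (π_1(p) + π_2(p))/2 ≤ 1/2 + ε. Consequently, with two equally weighted segments (α_1 = α_2 = 1/2) the profit ratio Π^U/Π* is at most 1/2 + ε, so the constant 1/2 in the half-approximation theorem for concave profit functions with common bounded support is tight. -/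

import Mathlib

/-!
Take the tent-shaped revenue curves on `[0, θ]` of height `1` peaking at the prices `1` and
`θ - 1`. A revenue curve `π` with `π p / p` nonincreasing and at most `1` is realised by the
CDF `1 - π p / p`, which is constant `1 - 1/a` before the peak `a`. At any uniform price `p`
the first segment earns at most `(θ - p) / (θ - 1)` and the second at most `p / (θ - 1)`, so
the average profit is at most `θ / (2 (θ - 1))`, which tends to `1/2` as `θ → ∞`.
-/

open Set

theorem concaveOn_univ_affine (c d : ℝ) : ConcaveOn ℝ univ (fun x => c + d * x) :=
  ⟨convex_univ, fun x _ y _ s t _ _ hst => by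
    simp only [smul_eq_mul]
    linear_combination c * hst⟩

noncomputable def tent (a θ p : ℝ) : ℝ := min (p / a) ((θ - p) / (θ - a))

noncomputable def tentCDF (a θ p : ℝ) : ℝ :=
  if p ≤ a then 1 - 1 / a else min 1 (1 - (θ / p - 1) / (θ - a))

section Tent

variable {a θ : ℝ}

theorem concaveOn_tent (a θ : ℝ) : ConcaveOn ℝ univ (tent a θ) :=
  ((concaveOn_univ_affine 0 a⁻¹).inf (concaveOn_univ_affine (θ / (θ - a)) (-(θ - a)⁻¹))).congr
    fun p _ => by simp only [Pi.inf_apply, tent]; congr 1 <;> ring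

theorem tent_le_one (ha : 0 < a) (haθ : a < θ) (p : ℝ) : tent a θ p ≤ 1 := by
  rcases le_total p a with hp | hp
  · exact (min_le_left _ _).trans ((div_le_one ha).2 hp)
  · exact (min_le_right _ _).trans ((div_le_one (sub_pos.2 haθ)).2 (by linarith))

theorem tent_self (ha : 0 < a) (haθ : a < θ) : tent a θ a = 1 := by
  simp [tent, ha.ne', (sub_pos.2 haθ).ne']

theorem sSup_image_tent (ha : 0 < a) (haθ : a < θ) : sSup (tent a θ '' Icc 0 θ) = 1 :=
  IsGreatest.csSup_eq ⟨⟨a, ⟨ha.le, haθ.le⟩, tent_self ha haθ⟩,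
    by rintro _ ⟨p, -, rfl⟩; exact tent_le_one ha haθ p⟩

theorem tent_add_tent_sub_le (a θ p : ℝ) : tent a θ p + tent (θ - a) θ p ≤ θ / (θ - a) :=
  calc tent a θ p + tent (θ - a) θ p ≤ (θ - p) / (θ - a) + p / (θ - a) :=
        add_le_add (min_le_right _ _) (min_le_left _ _)
    _ = θ / (θ - a) := by rw [← add_div, sub_add_cancel]

theorem div_sub_one_div_sub_le_inv (ha : 0 < a) (haθ : a < θ) {p : ℝ} (hp : a ≤ p) :
    (θ / p - 1) / (θ - a) ≤ a⁻¹ :=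
  calc (θ / p - 1) / (θ - a) ≤ (θ / a - 1) / (θ - a) := by
        gcongr
        linarith
    _ = a⁻¹ := by field_simp [(sub_pos.2 haθ).ne']

variable (ha : 1 ≤ a) (haθ : a < θ)
include ha haθ

theorem tentCDF_mem_Icc (p : ℝ) : tentCDF a θ p ∈ Icc 0 1 := by
  have ha₀ : 0 < a := by linarith
  have ha₁ : a⁻¹ ≤ 1 := inv_le_one_of_one_le₀ ha
  unfold tentCDF
  split_ifs with hp
  · rw [one_div]; constructor <;> linarith [inv_pos.2 ha₀]
  · have := div_sub_one_div_sub_le_inv ha₀ haθ (not_le.1 hp).le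
    exact ⟨le_min zero_le_one (by linarith), min_le_left _ _⟩

theorem monotone_tentCDF : Monotone (tentCDF a θ) := by
  have ha₀ : 0 < a := by linarith
  intro p q hpq
  unfold tentCDF
  split_ifs with hp hq hq
  · rfl
  · have := div_sub_one_div_sub_le_inv ha₀ haθ (not_le.1 hq).le
    exact le_min (by linarith [one_div_pos.2 ha₀]) (by rw [one_div]; linarith)
  · exact absurd (hpq.trans hq) hp
  · have hp₀ : 0 < p := by linarith
    gcongr
    linarith

theorem tentCDF_right : tentCDF a θ θ = 1 := by
  have hθ : θ ≠ 0 := by linarith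
  simp [tentCDF, not_le.2 haθ, hθ]

theorem mul_one_sub_tentCDF {p : ℝ} (hp : p ∈ Icc 0 θ) :
    p * (1 - tentCDF a θ p) = tent a θ p := by
  have ha₀ : 0 < a := by linarith
  have hθa : 0 < θ - a := sub_pos.2 haθ
  obtain ⟨hp₀, hpθ⟩ := hp
  unfold tentCDF tent
  split_ifs with hpa
  · rw [min_eq_left ((div_le_one ha₀).2 hpa |>.trans ((one_le_div hθa).2 (by linarith)))]
    ring
  · have hp₀' : 0 < p := by linarith
    have hx : 0 ≤ (θ / p - 1) / (θ - a) :=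
      div_nonneg (by rw [sub_nonneg, one_le_div hp₀']; exact hpθ) hθa.le
    rw [min_eq_right (by linarith), min_eq_right (((div_le_one hθa).2 (by linarith)).trans
      ((one_le_div ha₀).2 (not_le.1 hpa).le))]
    field_simp
    ring

theorem concaveOn_mul_one_sub_tentCDF :
    ConcaveOn ℝ (Icc 0 θ) (fun p => p * (1 - tentCDF a θ p)) :=
  ((concaveOn_tent a θ).subset (subset_univ _) (convex_Icc 0 θ)).congr
    fun _ hp => (mul_one_sub_tentCDF ha haθ hp).symm

theorem sSup_image_mul_one_sub_tentCDF :
    sSup ((fun p => p * (1 - tentCDF a θ p)) '' Icc 0 θ) = 1 := by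
  rw [image_congr fun _ hp => mul_one_sub_tentCDF ha haθ hp]
  exact sSup_image_tent (by linarith) haθ

end Tent

/-- **Tightness of the half approximation.**
For every `ε > 0` there exist a bounded common support `[0, θ̄]` and two CDFs
`F₁, F₂` (nondecreasing, values in `[0,1]`, equal to `1` at `θ̄`) whose profit
functions (with marginal cost `c = 0`) are concave on `[0, θ̄]` with maximal
per-segment profit equal to `1`, and yet with two equally weighted segments the
optimal uniform-price profit is at most `1/2 + ε`; hence the profit ratio
`Π^U / Π*` is at most `1/2 + ε` and the constant `1/2` is tight. -/
theorem half_approximation_tight :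
    ∀ ε : ℝ, 0 < ε →
      ∃ (θ : ℝ) (F₁ F₂ : ℝ → ℝ), 0 < θ ∧
        Monotone F₁ ∧ Monotone F₂ ∧
        (∀ p, 0 ≤ F₁ p ∧ F₁ p ≤ 1) ∧ (∀ p, 0 ≤ F₂ p ∧ F₂ p ≤ 1) ∧
        F₁ θ = 1 ∧ F₂ θ = 1 ∧
        ConcaveOn ℝ (Set.Icc 0 θ) (fun p => p * (1 - F₁ p)) ∧
        ConcaveOn ℝ (Set.Icc 0 θ) (fun p => p * (1 - F₂ p)) ∧
        sSup ((fun p => p * (1 - F₁ p)) '' Set.Icc 0 θ) = 1 ∧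
        sSup ((fun p => p * (1 - F₂ p)) '' Set.Icc 0 θ) = 1 ∧
        sSup ((fun p => (1 / 2) * (p * (1 - F₁ p)) + (1 / 2) * (p * (1 - F₂ p)))
            '' Set.Icc 0 θ) ≤ 1 / 2 + ε ∧
        sSup ((fun p => (1 / 2) * (p * (1 - F₁ p)) + (1 / 2) * (p * (1 - F₂ p)))
            '' Set.Icc 0 θ) /
          ((1 / 2) * sSup ((fun p => p * (1 - F₁ p)) '' Set.Icc 0 θ) +
            (1 / 2) * sSup ((fun p => p * (1 - F₂ p)) '' Set.Icc 0 θ))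
          ≤ 1 / 2 + ε := by
  intro ε hε
  set θ : ℝ := 2 + 1 / ε with hθ
  have h₁ : 1 < θ := by linarith [one_div_pos.2 hε]
  have h₂ : 1 ≤ θ - 1 := by linarith [one_div_pos.2 hε]
  have h₃ : θ - 1 < θ := by linarith
  have hratio : θ / (θ - 1) ≤ 1 + 2 * ε := by
    have : ε * θ = 2 * ε + 1 := by rw [hθ]; field_simp
    rw [div_le_iff₀ (by linarith)]
    nlinarith
  have hunif : sSup ((fun p => 1 / 2 * (p * (1 - tentCDF 1 θ p)) +
      1 / 2 * (p * (1 - tentCDF (θ - 1) θ p))) '' Icc 0 θ) ≤ 1 / 2 + ε := by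
    refine csSup_le ((nonempty_Icc.2 (by linarith)).image _) ?_
    rintro _ ⟨p, hp, rfl⟩
    dsimp only
    rw [mul_one_sub_tentCDF le_rfl h₁ hp, mul_one_sub_tentCDF h₂ h₃ hp]
    linarith [tent_add_tent_sub_le 1 θ p]
  have hsup₁ := sSup_image_mul_one_sub_tentCDF le_rfl h₁
  have hsup₂ := sSup_image_mul_one_sub_tentCDF h₂ h₃
  refine ⟨θ, tentCDF 1 θ, tentCDF (θ - 1) θ, by linarith,
    monotone_tentCDF le_rfl h₁, monotone_tentCDF h₂ h₃, tentCDF_mem_Icc le_rfl h₁,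
    tentCDF_mem_Icc h₂ h₃, tentCDF_right le_rfl h₁, tentCDF_right h₂ h₃,
    concaveOn_mul_one_sub_tentCDF le_rfl h₁, concaveOn_mul_one_sub_tentCDF h₂ h₃,
    hsup₁, hsup₂, hunif, ?_⟩
  rw [hsup₁, hsup₂, show (1 / 2 : ℝ) * 1 + 1 / 2 * 1 = 1 by norm_num, div_one]
  exact hunif
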